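/- arXiv:1109.6090 — 3 statements merged into one kernel-verified Lean document; each statement's English description precedes it below -/
import Mathlib

section
/- For every u ∈ {−1, 1} and every p ∈ [0, 1], ψ_u(p) ≤ Q(q*)/4, where q* = (−3 + √33)/12. In particular η* := sup_{p∈[0,1]} ψ₁(p) = Q(q*)/4 is finite. -/
/-!
With `q = u(2p-1)` one has `p(1-p) = (1-q²)/4` whenever `u² = 1`, and `ψ_u(p) = Q(q)/4`.
Since `Q'(q) = (q-1)(6q²+3q-1)`, the point `q* = (-3+√33)/12` is a critical point of `Q`, and
reducing modulo `6q*²+3q*-1` gives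
`Q(q*) - Q(q) = (q-q*)² (5/4 + q - 3q²/2 + q*(17/4 - 3q))`,
whose second factor is a concave function of `q` that is positive at `q = ±1` because `q* > 1/5`.
-/

/-- `ψ_u(p) = [2p(1−p) − (2p−1)((2p−1) − u)]·p(1−p)`. -/
def psi (u p : ℝ) : ℝ := (2*p*(1-p) - (2*p-1)*((2*p-1) - u)) * (p*(1-p))

/-- `Q(q) = (3/2)q⁴ − q³ − 2q² + q + 1/2`. -/
noncomputable def Q (q : ℝ) : ℝ := (3/2)*q^4 - q^3 - 2*q^2 + q + 1/2

noncomputable def qStar : ℝ := (-3 + √33) / 12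

lemma qStar_critical : 6 * qStar ^ 2 + 3 * qStar - 1 = 0 := by
  have h : √33 ^ 2 = 33 := Real.sq_sqrt (by norm_num)
  unfold qStar
  linear_combination h / 24

lemma qStar_mem_Ioo : qStar ∈ Set.Ioo (1 / 5) 1 := by
  have h : √33 ^ 2 = 33 := Real.sq_sqrt (by norm_num)
  have h0 := Real.sqrt_nonneg 33
  unfold qStar
  constructor <;> nlinarith

lemma Q_le_Q_of_critical {c q : ℝ} (hc : 6 * c ^ 2 + 3 * c - 1 = 0) (hc₅ : 1 / 5 ≤ c)
    (hq : q ∈ Set.Icc (-1) 1) : Q q ≤ Q c := by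
  obtain ⟨hq₁, hq₂⟩ := hq
  have hdiff : Q c - Q q = (q - c) ^ 2 * (5/4 + q - 3/2 * q ^ 2 + c * (17/4 - 3 * q)) := by
    unfold Q
    linear_combination (-(q - c) * (c - 1) - 3/4 * (q - c) ^ 2) * hc
  have hfactor : 0 ≤ 5/4 + q - 3/2 * q ^ 2 + c * (17/4 - 3 * q) := by
    nlinarith [mul_nonneg (sub_nonneg.2 hq₂) (neg_le_iff_add_nonneg.1 hq₁)]
  nlinarith [mul_nonneg (sq_nonneg (q - c)) hfactor]

lemma psi_eq_Q {u : ℝ} (hu : u ^ 2 = 1) (p : ℝ) : psi u p = Q (u * (2 * p - 1)) / 4 := by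
  unfold psi Q
  linear_combination (2 * p - 1) ^ 2 * ((1/2 + u * (2 * p - 1) - 3/2 * (2 * p - 1) ^ 2)
    + 3/2 * (1 - u ^ 2 * (2 * p - 1) ^ 2)) / 4 * hu

lemma mul_two_mul_sub_one_mem_Icc {u p : ℝ} (hu : u ^ 2 = 1) (hp : p ∈ Set.Icc 0 1) :
    u * (2 * p - 1) ∈ Set.Icc (-1) 1 := by
  have hsq : (u * (2 * p - 1)) ^ 2 ≤ 1 := by
    rw [mul_pow, hu, one_mul]
    nlinarith [hp.1, hp.2]
  exact abs_le.1 (sq_le_one_iff_abs_le_one _ |>.1 hsq)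

lemma psi_le_Q_qStar {u : ℝ} (hu : u ^ 2 = 1) {p : ℝ} (hp : p ∈ Set.Icc 0 1) :
    psi u p ≤ Q qStar / 4 := by
  rw [psi_eq_Q hu]
  gcongr
  exact Q_le_Q_of_critical qStar_critical qStar_mem_Ioo.1.le (mul_two_mul_sub_one_mem_Icc hu hp)

lemma isGreatest_psi_one : IsGreatest (psi 1 '' Set.Icc 0 1) (Q qStar / 4) := by
  obtain ⟨h₁, h₂⟩ := qStar_mem_Ioo
  refine ⟨⟨(1 + qStar) / 2, ⟨by linarith, by linarith⟩, ?_⟩, ?_⟩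
  · rw [psi_eq_Q (one_pow 2)]
    ring_nf
  · rintro _ ⟨p, hp, rfl⟩
    exact psi_le_Q_qStar (one_pow 2) hp

/-- for `u ∈ {−1,1}` and `p ∈ [0,1]`, `ψ_u(p) ≤ Q(q*)/4` with
`q* = (−3 + √33)/12`; in particular `η* = sup_{p∈[0,1]} ψ₁(p) = Q(q*)/4` is finite. -/
theorem stmt_4 :
    (∀ u ∈ ({-1, 1} : Set ℝ), ∀ p ∈ Set.Icc (0:ℝ) 1,
      psi u p ≤ Q ((-3 + Real.sqrt 33)/12) / 4) ∧
    sSup (psi 1 '' Set.Icc (0:ℝ) 1) = Q ((-3 + Real.sqrt 33)/12) / 4 := by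
  refine ⟨fun u hu p hp => psi_le_Q_qStar ?_ hp, isGreatest_psi_one.csSup_eq⟩
  rcases hu with rfl | rfl <;> norm_num
end

section
/- (Scalar majorization lemma.) Let η ≥ η* := sup_{p∈[0,1]} ψ₁(p). Then for every y ∈ {0,1} and all real u, ũ: (y − F(u))² ≤ (y − F(ũ))² + 2(F(ũ) − y)·F(ũ)(1 − F(ũ))·(u − ũ) + (η/2)(u − ũ)², with equality when u = ũ. -/
/-- The logistic function `F(u) = 1/(1 + exp(-u))`. -/
noncomputable def logisticF (u : ℝ) : ℝ := 1 / (1 + Real.exp (-u))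

/-!
With `p = F u`, the second derivative of `u ↦ (y - F u)²` is
`2p(1-p)(p(1-p) + (p-y)(1-2p))`, which is `ψ₁(p)` for `y = 1` and `ψ₁(1-p)` for `y = 0`,
hence at most `η* ≤ η`. So `η/2 · u² - (y - F u)²` is convex, and that it lies above its tangent
line at `ũ` is the claimed inequality.
-/

open Set Real

lemma logisticF_eq_sigmoid : logisticF = sigmoid := by
  funext u
  rw [logisticF, sigmoid_def, one_div]

lemma ConvexOn.add_mul_sub_le_of_hasDerivAt {f : ℝ → ℝ} {f' x y : ℝ} (hf : ConvexOn ℝ univ f)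
    (hx : HasDerivAt f f' x) : f x + f' * (y - x) ≤ f y := by
  rcases lt_trichotomy y x with hyx | rfl | hxy
  · have h := hf.slope_le_of_hasDerivAt (mem_univ y) (mem_univ x) hyx hx
    rw [slope_def_field, div_le_iff₀ (sub_pos.2 hyx)] at h
    linarith
  · simp
  · have h := hf.le_slope_of_hasDerivAt (mem_univ x) (mem_univ y) hxy hx
    rw [slope_def_field, le_div_iff₀ (sub_pos.2 hxy)] at h
    linarith

theorem le_add_mul_sub_add_sq_of_hasDerivAt2_le {f f' f'' : ℝ → ℝ} {η : ℝ}
    (hf : ∀ t, HasDerivAt f (f' t) t) (hf' : ∀ t, HasDerivAt f' (f'' t) t)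
    (hf'' : ∀ t, f'' t ≤ η) (u v : ℝ) :
    f u ≤ f v + f' v * (u - v) + η / 2 * (u - v) ^ 2 := by
  set k : ℝ → ℝ := fun t => η / 2 * t ^ 2 - f t
  have hk : ∀ t, HasDerivAt k (η * t - f' t) t := fun t =>
    (((hasDerivAt_pow 2 t).const_mul (η / 2)).sub (hf t)).congr_deriv (by ring)
  have hk' : ∀ t, HasDerivAt (fun t => η * t - f' t) (η - f'' t) t := fun t =>
    (((hasDerivAt_id t).const_mul η).sub (hf' t)).congr_deriv (by ring)
  have hconv : ConvexOn ℝ univ k := by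
    refine convexOn_of_hasDerivWithinAt2_nonneg convex_univ
      (fun t _ => (hk t).continuousAt.continuousWithinAt)
      (fun t _ => (hk t).hasDerivWithinAt) (fun t _ => (hk' t).hasDerivWithinAt) ?_
    exact fun t _ => sub_nonneg.2 (hf'' t)
  have tangent := hconv.add_mul_sub_le_of_hasDerivAt (y := u) (hk v)
  linear_combination tangent

def sqLossCurv (y p : ℝ) : ℝ := 2 * (p * (1 - p)) * (p * (1 - p) + (p - y) * (1 - 2 * p))

lemma hasDerivAt_sq_sub_sigmoid (y t : ℝ) :
    HasDerivAt (fun s => (y - sigmoid s) ^ 2)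
      (2 * (sigmoid t - y) * (sigmoid t * (1 - sigmoid t))) t :=
  (((hasDerivAt_sigmoid t).const_sub y).pow 2).congr_deriv (by ring)

lemma hasDerivAt_deriv_sq_sub_sigmoid (y t : ℝ) :
    HasDerivAt (fun s => 2 * (sigmoid s - y) * (sigmoid s * (1 - sigmoid s)))
      (sqLossCurv y (sigmoid t)) t := by
  have hσ := hasDerivAt_sigmoid t
  exact (((hσ.sub_const y).const_mul 2).mul (hσ.mul (hσ.const_sub 1))).congr_deriv
    (by simp only [sqLossCurv, Pi.mul_apply]; ring)

lemma sqLossCurv_one (p : ℝ) : sqLossCurv 1 p = psi 1 p := by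
  rw [sqLossCurv, psi]
  ring

lemma sqLossCurv_zero (p : ℝ) : sqLossCurv 0 p = psi 1 (1 - p) := by
  rw [sqLossCurv, psi]
  ring

lemma psi_le_of_sSup_le {u η p : ℝ} (hη : sSup (psi u '' Icc 0 1) ≤ η) (hp : p ∈ Icc 0 1) :
    psi u p ≤ η := by
  have hcont : Continuous (psi u) := by unfold psi; fun_prop
  exact (le_csSup ((isCompact_Icc.image hcont).bddAbove) (mem_image_of_mem _ hp)).trans hη

lemma sqLossCurv_le {y η p : ℝ} (hy : y = 0 ∨ y = 1) (hη : sSup (psi 1 '' Icc 0 1) ≤ η)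
    (hp : p ∈ Icc 0 1) : sqLossCurv y p ≤ η := by
  rcases hy with rfl | rfl
  · rw [sqLossCurv_zero]
    exact psi_le_of_sSup_le hη ⟨by linarith [hp.2], by linarith [hp.1]⟩
  · rw [sqLossCurv_one]
    exact psi_le_of_sSup_le hη hp

/-- scalar majorization lemma: if `η ≥ η* = sup_{p∈[0,1]} ψ₁(p)`, then for
`y ∈ {0,1}` and all real `u, ũ`,
`(y − F(u))² ≤ (y − F(ũ))² + 2(F(ũ) − y)·F(ũ)(1 − F(ũ))·(u − ũ) + (η/2)(u − ũ)²`,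
with equality when `u = ũ`. -/
theorem stmt_5 (η : ℝ) (hη : sSup (psi 1 '' Set.Icc (0:ℝ) 1) ≤ η)
    (y : ℝ) (hy : y = 0 ∨ y = 1) (u v : ℝ) :
    (y - logisticF u)^2 ≤
      (y - logisticF v)^2
        + 2 * (logisticF v - y) * (logisticF v * (1 - logisticF v)) * (u - v)
        + (η/2) * (u - v)^2 ∧
    (y - logisticF v)^2 =
      (y - logisticF v)^2
        + 2 * (logisticF v - y) * (logisticF v * (1 - logisticF v)) * (v - v)
        + (η/2) * (v - v)^2 := by
  refine ⟨?_, by ring⟩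
  rw [logisticF_eq_sigmoid]
  exact le_add_mul_sub_add_sq_of_hasDerivAt2_le (hasDerivAt_sq_sub_sigmoid y)
    (hasDerivAt_deriv_sq_sub_sigmoid y)
    (fun t => sqLossCurv_le hy hη ⟨(sigmoid_pos t).le, sigmoid_le_one t⟩) u v
end

section
/- (Characterization of the null-model penalization threshold λ*.) Let X ∈ ℝ^{n×p} have centered columns x_{(1)}, …, x_{(p)} (so 1ᵀx_{(j)} = 0 for each j), let y ∈ {0,1}ⁿ with sample mean ȳ = (1/n)1ᵀy ∈ (0,1), let λ > 0, α ∈ (0,1], and consider the objective ξ(β₀, β) = (1/n)‖y − F(β₀·1 + Xβ)‖₂² + λ(α‖β‖₁ + ((1−α)/2)‖β‖₂²). Then the point θ₀ = (log(ȳ/(1−ȳ)), 0) satisfies the first-order stationarity condition (zero partial derivative in β₀ and 0 contained in the subdifferential of ξ with respect to each β_j) if and only if λ ≥ λ* := (2/(nα))·ȳ(1−ȳ)·max_{j=1,…,p} |x_{(j)}ᵀ y|. -/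
/-!
At `θ₀` every fitted probability equals `ȳ`, so by the chain rule (with `F' = F(1 − F)`) the
partial derivative of the loss along a direction `x` is `−(2/n)·ȳ(1−ȳ)·∑ᵢ (yᵢ − ȳ) xᵢ`.
For the intercept (`x = 1`) this vanishes because `ȳ` is the mean of `y`; for a centered column
`x_{(j)}` it equals `−(2/n)·ȳ(1−ȳ)·x_{(j)}ᵀy`. The ridge term has zero derivative at `β = 0`,
and `0 ∈ D + λα·[−1, 1]` holds iff `|D| ≤ λα`; taking all `j` at once gives `λ ≥ λ*`.
-/

open Finset

lemma logisticF_hasDerivAt (u : ℝ) :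
    HasDerivAt logisticF (logisticF u * (1 - logisticF u)) u := by
  have h : HasDerivAt (fun u : ℝ => 1 + Real.exp (-u)) (-Real.exp (-u)) u := by
    simpa using ((hasDerivAt_neg u).exp).const_add 1
  refine ((hasDerivAt_const u (1 : ℝ)).fun_div h (by positivity)).congr_deriv ?_
  simp only [logisticF]
  field_simp
  ring

lemma logisticF_log_div_one_sub {m : ℝ} (hm : m ∈ Set.Ioo (0 : ℝ) 1) :
    logisticF (Real.log (m / (1 - m))) = m := by
  have h0 : 0 < m := hm.1
  have h1 : 0 < 1 - m := sub_pos.mpr hm.2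
  rw [logisticF, ← Real.log_inv, Real.exp_log (by positivity)]
  field_simp
  ring

lemma hasDerivAt_sum_sq_sub_logisticF {ι : Type*} [Fintype ι] (y : ι → ℝ)
    {u : ι → ℝ → ℝ} {u' : ι → ℝ} {t m : ℝ}
    (hu : ∀ i, HasDerivAt (u i) (u' i) t) (hm : ∀ i, logisticF (u i t) = m) :
    HasDerivAt (fun s => ∑ i, (y i - logisticF (u i s)) ^ 2)
      (-2 * (m * (1 - m)) * ∑ i, (y i - m) * u' i) t := by
  have hi : ∀ i, HasDerivAt (fun s => (y i - logisticF (u i s)) ^ 2)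
      (2 * (y i - m) * -(m * (1 - m) * u' i)) t := fun i => by
    have h := (((logisticF_hasDerivAt (u i t)).comp t (hu i)).const_sub (y i)).fun_pow 2
    simpa [hm] using h
  refine (HasDerivAt.fun_sum (u := univ) fun i _ => hi i).congr_deriv ?_
  rw [mul_sum]
  exact sum_congr rfl fun i _ => by ring

lemma sum_sub_mul_eq_sum_mul_of_sum_eq_zero {ι : Type*} [Fintype ι] {x : ι → ℝ}
    (hx : ∑ i, x i = 0) (y : ι → ℝ) (c : ℝ) :
    ∑ i, (y i - c) * x i = ∑ i, x i * y i := by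
  simp only [sub_mul, sum_sub_distrib, ← mul_sum, hx, mul_zero, sub_zero, mul_comm (y _)]

/-- `0 ∈ D + c·[−1, 1]`: the subdifferential condition for the penalty `c·|β|` at `β = 0`. -/
lemma exists_mem_Icc_add_mul_eq_zero_iff {D c : ℝ} (hc : 0 < c) :
    (∃ s ∈ Set.Icc (-1 : ℝ) 1, D + c * s = 0) ↔ |D| ≤ c := by
  constructor
  · rintro ⟨s, hs, hD⟩
    rw [eq_neg_of_add_eq_zero_left hD, abs_neg, abs_mul, abs_of_pos hc]
    exact mul_le_of_le_one_right hc.le (abs_le.mpr hs)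
  · intro hD
    refine ⟨-D / c, abs_le.mp ?_, by field_simp; ring⟩
    rw [abs_div, abs_neg, abs_of_pos hc]
    exact div_le_one_of_le₀ hD hc.le

theorem stmt_13_general (n p : ℕ) (hp : 0 < p)
    (X : Matrix (Fin n) (Fin p) ℝ) (hcent : ∀ j, ∑ i, X i j = 0)
    (y : Fin n → ℝ)
    (ybar : ℝ) (hybar : ybar = (∑ i, y i) / n) (hmean : ybar ∈ Set.Ioo (0:ℝ) 1)
    (lam α : ℝ) (hlam : 0 < lam) (hα : α ∈ Set.Ioc (0:ℝ) 1) :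
    (deriv (fun b : ℝ => (1/(n:ℝ)) * ∑ i, (y i - logisticF b)^2)
        (Real.log (ybar / (1 - ybar))) = 0 ∧
     ∀ j : Fin p, ∃ s ∈ Set.Icc (-1:ℝ) 1,
        deriv (fun t : ℝ =>
            (1/(n:ℝ)) * ∑ i,
                (y i - logisticF (Real.log (ybar / (1 - ybar)) + t * X i j))^2
              + lam * ((1 - α)/2) * t^2) 0
          + lam * α * s = 0) ↔
    lam ≥ (2/((n:ℝ) * α)) * (ybar * (1 - ybar))
        * (Finset.univ.sup' (Finset.univ_nonempty_iff.mpr ⟨⟨0, hp⟩⟩)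
            fun j : Fin p => |∑ i, X i j * y i|) := by
  set b₀ := Real.log (ybar / (1 - ybar))
  have hF : logisticF b₀ = ybar := logisticF_log_div_one_sub hmean
  have hv : 0 < ybar * (1 - ybar) := mul_pos hmean.1 (sub_pos.mpr hmean.2)
  have hn : (n : ℝ) ≠ 0 := fun h => hmean.1.ne' (by rwa [h, div_zero] at hybar)
  have h_intercept : deriv (fun b : ℝ => (1/(n:ℝ)) * ∑ i, (y i - logisticF b)^2) b₀ = 0 := by
    refine (((hasDerivAt_sum_sq_sub_logisticF y (u := fun _ b => b)
      (fun _ => hasDerivAt_id b₀) fun _ => hF).const_mul _).deriv).trans ?_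
    simp only [mul_one, sum_sub_distrib, sum_const, card_univ,
      Fintype.card_fin, nsmul_eq_mul, hybar, mul_div_cancel₀ _ hn, sub_self, mul_zero]
  have h_coord : ∀ j : Fin p, deriv (fun t : ℝ =>
      (1/(n:ℝ)) * ∑ i, (y i - logisticF (b₀ + t * X i j))^2 + lam * ((1 - α)/2) * t^2) 0
      = -(2 / n * (ybar * (1 - ybar)) * ∑ i, X i j * y i) := fun j => by
    have hlin : ∀ i, HasDerivAt (fun t : ℝ => b₀ + t * X i j) (X i j) 0 := fun i => by
      simpa using ((hasDerivAt_id (0:ℝ)).mul_const (X i j)).const_add b₀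
    refine ((((hasDerivAt_sum_sq_sub_logisticF y hlin fun _ => by simpa using hF).const_mul
      (1 / (n:ℝ))).add ((hasDerivAt_pow 2 (0:ℝ)).const_mul (lam * ((1 - α) / 2)))).deriv).trans ?_
    rw [sum_sub_mul_eq_sum_mul_of_sum_eq_zero (hcent j)]
    ring
  have hα₀ : 0 < α := hα.1
  have hc : 0 ≤ 2 / (n * α) * (ybar * (1 - ybar)) := by positivity
  simp only [h_intercept, h_coord, exists_mem_Icc_add_mul_eq_zero_iff (mul_pos hlam hα₀), true_and,
    abs_neg, abs_mul, abs_of_pos hv, abs_of_nonneg (by positivity : (0:ℝ) ≤ 2 / n)]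
  rw [ge_iff_le, mul₀_sup' hc, sup'_le_iff]
  refine forall_congr' fun j => ?_
  rw [imp_iff_right (mem_univ j), ← div_le_iff₀ hα₀]
  exact iff_of_eq (by congr 1; ring)

/-- characterization of the null-model penalization threshold `λ*`:
for centered columns and `ȳ ∈ (0,1)`, the point `θ₀ = (log(ȳ/(1−ȳ)), 0)` satisfies the
first-order stationarity condition for
`ξ(β₀,β) = (1/n)‖y − F(β₀1 + Xβ)‖₂² + λ(α‖β‖₁ + ((1−α)/2)‖β‖₂²)`
(zero partial derivative in `β₀`, and `0` in the subdifferential with respect to each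
`βⱼ`, i.e. the smooth partial derivative is cancelled by some `λα·s`, `s ∈ [−1,1]`)
if and only if `λ ≥ λ* = (2/(nα))·ȳ(1−ȳ)·max_j |x_{(j)}ᵀy|`. -/
theorem stmt_13 (n p : ℕ) (hn : 0 < n) (hp : 0 < p)
    (X : Matrix (Fin n) (Fin p) ℝ) (hcent : ∀ j, ∑ i, X i j = 0)
    (y : Fin n → ℝ) (hy : ∀ i, y i = 0 ∨ y i = 1)
    (ybar : ℝ) (hybar : ybar = (∑ i, y i) / n) (hmean : ybar ∈ Set.Ioo (0:ℝ) 1)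
    (lam α : ℝ) (hlam : 0 < lam) (hα : α ∈ Set.Ioc (0:ℝ) 1) :
    (deriv (fun b : ℝ => (1/(n:ℝ)) * ∑ i, (y i - logisticF b)^2)
        (Real.log (ybar / (1 - ybar))) = 0 ∧
     ∀ j : Fin p, ∃ s ∈ Set.Icc (-1:ℝ) 1,
        deriv (fun t : ℝ =>
            (1/(n:ℝ)) * ∑ i,
                (y i - logisticF (Real.log (ybar / (1 - ybar)) + t * X i j))^2
              + lam * ((1 - α)/2) * t^2) 0
          + lam * α * s = 0) ↔
    lam ≥ (2/((n:ℝ) * α)) * (ybar * (1 - ybar))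
        * (Finset.univ.sup' (Finset.univ_nonempty_iff.mpr ⟨⟨0, hp⟩⟩)
            fun j : Fin p => |∑ i, X i j * y i|) :=
  stmt_13_general n p hp X hcent y ybar hybar hmean lam α hlam hα
end
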